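/- arXiv:2211.14696 — 2 statements merged into one kernel-verified Lean document; each statement's English description precedes it below -/
import Mathlib

section
/- For every n ≥ 1, the diagonal functor from the walking reflexive pair category D₀ to the product category D₀ⁿ is a final functor. -/
/-!
For the diagonal `Δ : D₀ ⥤ D₀^ι`, an object of `StructuredArrow X Δ` with target `zero` is a
family `fᵢ : Xᵢ ⟶ zero`. Each `fᵢ` factors as `gᵢ ≫ right` with `gᵢ ≫ left` the canonical map
`Xᵢ ⟶ zero` (for `fᵢ = right` take `gᵢ = 𝟙 one`), so the family `g` links `f` by a span to the
canonical family, all coordinates at once. Arrows with target `one` are joined to arrows with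
target `zero` by `left`, hence every comma category is connected.
-/

open CategoryTheory CategoryTheory.Limits

namespace CategoryTheory.Limits.WalkingReflexivePair

def toZero : ∀ X : WalkingReflexivePair, X ⟶ zero
  | zero => 𝟙 zero
  | one => Hom.left

def rightLift : ∀ {X : WalkingReflexivePair}, Hom X zero → (X ⟶ one)
  | _, .left => Hom.left ≫ Hom.reflexion
  | _, .right => 𝟙 one
  | _, .id _ => Hom.reflexion

lemma rightLift_comp_right {X : WalkingReflexivePair} (f : X ⟶ zero) :
    rightLift f ≫ Hom.right = f := by
  change Hom X zero at f
  cases f <;> rfl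

lemma rightLift_comp_left {X : WalkingReflexivePair} (f : X ⟶ zero) :
    rightLift f ≫ Hom.left = toZero X := by
  change Hom X zero at f
  cases f <;> rfl

section Diagonal

variable {ι : Type*} {X : ι → WalkingReflexivePair}

local notation "diag" => Functor.pi' fun _ : ι => 𝟭 WalkingReflexivePair

variable (X) in
abbrev structuredArrowToZero : StructuredArrow X diag := .mk (Y := zero) (toZero <| X ·)

lemma zigzag_mk_structuredArrowToZero (f : X ⟶ (diag).obj zero) :
    Zigzag (StructuredArrow.mk f) (structuredArrowToZero X) :=
  let lift : StructuredArrow X diag := .mk (Y := one) (rightLift <| f ·)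
  (Zigzag.of_inv (StructuredArrow.homMk (f := lift) (f' := .mk f) Hom.right
      (funext (rightLift_comp_right <| f ·)))).trans
    (Zigzag.of_hom (StructuredArrow.homMk (f := lift) (f' := structuredArrowToZero X) Hom.left
      (funext (rightLift_comp_left <| f ·))))

lemma zigzag_structuredArrowToZero (j : StructuredArrow X diag) :
    Zigzag j (structuredArrowToZero X) := by
  obtain ⟨⟨⟨⟩⟩, _ | _, f⟩ := j
  · exact zigzag_mk_structuredArrowToZero f
  · exact (Zigzag.of_hom (StructuredArrow.homMk' _ Hom.left)).trans
      (zigzag_mk_structuredArrowToZero _)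

instance final_pi'_id : (diag).Final where
  out X :=
    have : Nonempty (StructuredArrow X diag) := ⟨structuredArrowToZero X⟩
    zigzag_isConnected fun j₁ j₂ =>
      (zigzag_structuredArrowToZero j₁).trans (zigzag_structuredArrowToZero j₂).symm

end Diagonal

end CategoryTheory.Limits.WalkingReflexivePair

theorem stmt_7_general (n : ℕ) :
    (Functor.pi' (fun _ : Fin n => 𝟭 WalkingReflexivePair)).Final :=
  inferInstance

/-- For every `n ≥ 1`, the diagonal functor from the walking reflexive pair category `D₀`
to the product category `D₀ⁿ` is a final functor. -/
theorem stmt_7 (n : ℕ) (hn : 1 ≤ n) :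
    (Functor.pi' (fun _ : Fin n => 𝟭 WalkingReflexivePair)).Final :=
  stmt_7_general n
end

section
/- If a multivariable functor F : Cⁿ → C preserves reflexive coequalizers in each variable separately (with the other variables fixed), then F preserves reflexive coequalizers of n-tuples: for reflexive pairs X_i ⇉ Y_i (1 ≤ i ≤ n), the canonical morphism from the coequalizer of F(X₁,…,Xₙ) ⇉ F(Y₁,…,Yₙ) to F(Ceq(X₁⇉Y₁), …, Ceq(Xₙ⇉Yₙ)) is an isomorphism. -/
open CategoryTheory CategoryTheory.Limits

/-- `q : Y ⟶ Q` is a coequalizer of `f, g : X ⟶ Y`, expressed elementarily. -/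
def IsCoeq {C : Type u} [Category.{v} C] {X Y Q : C} (f g : X ⟶ Y) (q : Y ⟶ Q) : Prop :=
  f ≫ q = g ≫ q ∧ ∀ (Z : C) (k : Y ⟶ Z), f ≫ k = g ≫ k → ∃! d : Q ⟶ Z, q ≫ d = k

/-- The morphism of the product category `Cⁿ` which is `φ` in the `i`-th component and the
identity (of `A j`) in all other components. -/
def updHom {C : Type u} [Category.{v} C] {n : ℕ} (A : Fin n → C) (i : Fin n)
    {X Y : C} (φ : X ⟶ Y) : Function.update A i X ⟶ Function.update A i Y :=
  fun j =>
    if h : j = i then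
      eqToHom (by rw [h, Function.update_self]) ≫ φ ≫ eqToHom (by rw [h, Function.update_self])
    else
      eqToHom (by rw [Function.update_of_ne h, Function.update_of_ne h])


/-!
The reflexive pairs are replaced by identities one coordinate at a time, by induction on the set
of coordinates where the pair is still nontrivial; once all pairs are identities, `F q` is an
isomorphism. For the step at coordinate `i`, `F q` factors as `F` of `q i` in coordinate `i`
followed by `F` of `q` with the `i`-th pair replaced by `𝟙 (Q i)`. The first factor is a
coequalizer by separate preservation, the second by induction, and the sections `s` compare
both one-variable pairs with `(F f, F g)`, so that the composite coequalizes `(F f, F g)`.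
-/

namespace IsCoeq

variable {C : Type u} [Category.{v} C] {X Y Q : C} {f g : X ⟶ Y} {q : Y ⟶ Q}

theorem cancel (h : IsCoeq f g q) {Z : C} {u w : Q ⟶ Z} (huw : q ≫ u = q ≫ w) : u = w := by
  obtain ⟨d, -, hd⟩ := h.2 Z (q ≫ w) (by rw [← Category.assoc, h.1, Category.assoc])
  exact (hd u huw).trans (hd w rfl).symm

theorem epi (h : IsCoeq f g q) : Epi q :=
  ⟨fun _ _ => h.cancel⟩

theorem isIso_of_eq (h : IsCoeq f f q) : IsIso q := by
  obtain ⟨d, hd, -⟩ := h.2 Y (𝟙 Y) rfl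
  exact ⟨d, hd, h.cancel (by rw [reassoc_of% hd, Category.comp_id])⟩

theorem isIso_of_isCoeq {E : C} {e : Y ⟶ E} (he : IsCoeq f g e) (hq : IsCoeq f g q)
    {h : E ⟶ Q} (hh : e ≫ h = q) : IsIso h := by
  obtain ⟨d, hd, -⟩ := hq.2 E e he.1
  exact ⟨d, he.cancel (by rw [reassoc_of% hh, hd, Category.comp_id]),
    hq.cancel (by rw [reassoc_of% hd, hh, Category.comp_id])⟩

end IsCoeq

theorem isCoeq_of_isIso {C : Type u} [Category.{v} C] {X Y Q : C} (f : X ⟶ Y) (q : Y ⟶ Q)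
    [IsIso q] : IsCoeq f f q :=
  ⟨rfl, fun _ k _ => ⟨inv q ≫ k, by simp, fun d hd => by simp [← hd]⟩⟩

theorem isCoeq_eqToHom_conj_iff {C : Type u} [Category.{v} C] {X Y Q X' Y' Q' : C}
    (hX : X = X') (hY : Y = Y') (hQ : Q = Q') {f g : X ⟶ Y} {q : Y ⟶ Q} :
    IsCoeq (eqToHom hX.symm ≫ f ≫ eqToHom hY) (eqToHom hX.symm ≫ g ≫ eqToHom hY)
      (eqToHom hY.symm ≫ q ≫ eqToHom hQ) ↔ IsCoeq f g q := by
  subst hX hY hQ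
  simp

theorem isCoeq_comp {C : Type u} [Category.{v} C] {X Y M Q X₁ X₂ X₂' : C} {f g : X ⟶ Y}
    {a : Y ⟶ M} {b : M ⟶ Q} (hfg : f ≫ a ≫ b = g ≫ a ≫ b)
    {f₁ g₁ : X₁ ⟶ Y} (ha : IsCoeq f₁ g₁ a) (v : X₁ ⟶ X) (hvf : v ≫ f = f₁) (hvg : v ≫ g = g₁)
    {f₂ g₂ : X₂ ⟶ M} (hb : IsCoeq f₂ g₂ b) (p : X₂' ⟶ X₂) [Epi p] (c : X₂' ⟶ X)
    (hcf : p ≫ f₂ = c ≫ f ≫ a) (hcg : p ≫ g₂ = c ≫ g ≫ a) :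
    IsCoeq f g (a ≫ b) := by
  refine ⟨hfg, fun Z k hk => ?_⟩
  obtain ⟨k₁, hk₁, -⟩ := ha.2 Z k (by rw [← hvf, ← hvg, Category.assoc, Category.assoc, hk])
  have hk₁' : f₂ ≫ k₁ = g₂ ≫ k₁ := by
    rw [← cancel_epi p, reassoc_of% hcf, reassoc_of% hcg, hk₁, hk]
  obtain ⟨d, hd, -⟩ := hb.2 Z k₁ hk₁'
  have : Epi b := hb.epi
  have : Epi a := ha.epi
  exact ⟨d, by simp only [Category.assoc, hd, hk₁], fun d' hd' => by
    rw [← cancel_epi (a ≫ b), hd', Category.assoc, hd, hk₁]⟩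

section UpdateHom

variable {C : Type u} [Category.{v} C] {ι : Type*} [DecidableEq ι]

def updateHom {A B : ι → C} (φ : A ⟶ B) (i : ι) {X Y : C} (ψ : X ⟶ Y) :
    Function.update A i X ⟶ Function.update B i Y :=
  fun j =>
    if h : j = i then
      eqToHom (by rw [h, Function.update_self]) ≫ ψ ≫ eqToHom (by rw [h, Function.update_self])
    else
      eqToHom (Function.update_of_ne h _ _) ≫ φ j ≫ eqToHom (Function.update_of_ne h _ _).symm

variable {A B D : ι → C} (φ : A ⟶ B) (i : ι) {X Y Z : C} (ψ : X ⟶ Y)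

theorem updateHom_apply_self :
    updateHom φ i ψ i = eqToHom (Function.update_self i X A) ≫ ψ ≫
      eqToHom (Function.update_self i Y B).symm := by
  simp [updateHom]

theorem updateHom_apply_of_ne {j : ι} (h : j ≠ i) :
    updateHom φ i ψ j = eqToHom (Function.update_of_ne h X A) ≫ φ j ≫
      eqToHom (Function.update_of_ne h Y B).symm := by
  simp [updateHom, h]

@[simp]
theorem updateHom_comp (φ' : B ⟶ D) (ψ' : Y ⟶ Z) :
    updateHom φ i ψ ≫ updateHom φ' i ψ' = updateHom (φ ≫ φ') i (ψ ≫ ψ') := by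
  funext j
  by_cases h : j = i <;> simp [updateHom, h]

@[simp]
theorem updateHom_id : updateHom (𝟙 A) i (𝟙 X) = 𝟙 _ := by
  funext j
  by_cases h : j = i <;> simp [updateHom, h]

theorem updateHom_self :
    updateHom φ i (φ i) = eqToHom (Function.update_eq_self i A) ≫ φ ≫
      eqToHom (Function.update_eq_self i B).symm := by
  funext j
  by_cases h : j = i
  · subst h; simp [updateHom, Functor.eqToHom_proj]
  · simp [updateHom, h, Functor.eqToHom_proj]

end UpdateHom

theorem updHom_eq_updateHom {C : Type u} [Category.{v} C] {n : ℕ} (A : Fin n → C) (i : Fin n)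
    {X Y : C} (ψ : X ⟶ Y) : updHom A i ψ = updateHom (𝟙 A) i ψ := by
  funext j
  by_cases h : j = i <;> simp [updHom, updateHom, h]

theorem isCoeq_updateHom_apply {C : Type u} [Category.{v} C] {ι : Type*} [DecidableEq ι]
    {X Y Q : ι → C} {f g : X ⟶ Y} {q : Y ⟶ Q} (hq : ∀ j, IsCoeq (f j) (g j) (q j)) (i : ι)
    {X' Y' Q' : C} {f' g' : X' ⟶ Y'} {q' : Y' ⟶ Q'} (hq' : IsCoeq f' g' q') (j : ι) :
    IsCoeq (updateHom f i f' j) (updateHom g i g' j) (updateHom q i q' j) := by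
  by_cases h : j = i
  · subst h
    simp only [updateHom_apply_self]
    exact (isCoeq_eqToHom_conj_iff (Function.update_self j X' X).symm _ _).mpr hq'
  · simp only [updateHom_apply_of_ne _ _ _ h]
    exact (isCoeq_eqToHom_conj_iff (Function.update_of_ne h X' X).symm _ _).mpr (hq j)

section Functor

variable {C : Type u} [Category.{v} C] {n : ℕ}

def PreservesReflexiveCoeqSeparately (F : (Fin n → C) ⥤ C) : Prop :=
  ∀ (i : Fin n) (A : Fin n → C) (X Y : C) (f g : X ⟶ Y) (s : Y ⟶ X),
    s ≫ f = 𝟙 Y → s ≫ g = 𝟙 Y →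
    ∀ (Q : C) (q : Y ⟶ Q), IsCoeq f g q →
      IsCoeq (F.map (updHom A i f)) (F.map (updHom A i g)) (F.map (updHom A i q))

variable {F : (Fin n → C) ⥤ C} (hF : PreservesReflexiveCoeqSeparately F)
  {X Y Q : Fin n → C} {f g : X ⟶ Y} {s : Y ⟶ X} {q : Y ⟶ Q}
include hF

theorem isCoeq_map_of_isCoeq_map_updateHom (hsf : s ≫ f = 𝟙 Y) (hsg : s ≫ g = 𝟙 Y)
    (hq : ∀ j, IsCoeq (f j) (g j) (q j)) (i : Fin n)
    (h : IsCoeq (F.map (updateHom f i (𝟙 (Q i)))) (F.map (updateHom g i (𝟙 (Q i))))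
      (F.map (updateHom q i (𝟙 (Q i))))) :
    IsCoeq (F.map f) (F.map g) (F.map q) := by
  have hsfi : s i ≫ f i = 𝟙 (Y i) := congr_fun hsf i
  have hsgi : s i ≫ g i = 𝟙 (Y i) := congr_fun hsg i
  have ha := hF i Y _ _ (f i) (g i) (s i) hsfi hsgi _ (q i) (hq i)
  have hp := (hF i X _ _ (f i) (g i) (s i) hsfi hsgi _ (q i) (hq i)).epi
  simp only [updHom_eq_updateHom] at ha hp
  have hfq : f ≫ q = g ≫ q := funext fun j => (hq j).1
  have hfac : updateHom q i (q i) = updateHom (𝟙 Y) i (q i) ≫ updateHom q i (𝟙 (Q i)) := by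
    simp
  have hupd : IsCoeq (F.map (updateHom f i (f i))) (F.map (updateHom g i (g i)))
      (F.map (updateHom q i (q i))) := by
    rw [hfac, F.map_comp]
    -- the comparison maps are `s` off `i` and `s i` at `i`
    refine isCoeq_comp ?_ ha (F.map (updateHom s i (𝟙 (X i)))) ?_ ?_ h
      (F.map (updateHom (𝟙 X) i (q i))) (F.map (updateHom (𝟙 X) i (s i))) ?_ ?_
    all_goals simp only [← F.map_comp, updateHom_comp, Category.id_comp, Category.comp_id]
    · rw [hfq, (hq i).1]
    · rw [hsf]
    · rw [hsg]
    · rw [reassoc_of% hsfi]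
    · rw [reassoc_of% hsgi]
  simp only [updateHom_self, F.map_comp, eqToHom_map] at hupd
  exact (isCoeq_eqToHom_conj_iff (congrArg F.obj (Function.update_eq_self i X).symm) _ _).mp hupd

theorem isCoeq_map_of_eq_of_notMem (U : Finset (Fin n)) :
    ∀ {X Y Q : Fin n → C} {f g : X ⟶ Y} {s : Y ⟶ X} {q : Y ⟶ Q}, s ≫ f = 𝟙 Y → s ≫ g = 𝟙 Y →
      (∀ j, IsCoeq (f j) (g j) (q j)) → (∀ j ∉ U, f j = g j) →
      IsCoeq (F.map f) (F.map g) (F.map q) := by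
  induction U using Finset.induction_on with
  | empty =>
    intro X Y Q f g s q _ _ hq hfg
    obtain rfl : f = g := funext fun j => hfg j (Finset.notMem_empty j)
    have : IsIso q := (isIso_pi_iff q).mpr fun j => (hq j).isIso_of_eq
    exact isCoeq_of_isIso _ _
  | insert i U _ ih =>
    intro X Y Q f g s q hsf hsg hq hfg
    refine isCoeq_map_of_isCoeq_map_updateHom hF hsf hsg hq i (ih (s := updateHom s i (𝟙 (Q i)))
      ?_ ?_ (isCoeq_updateHom_apply hq i (isCoeq_of_isIso _ _)) ?_)
    · rw [updateHom_comp, hsf, Category.id_comp, updateHom_id]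
    · rw [updateHom_comp, hsg, Category.id_comp, updateHom_id]
    · intro j hj
      by_cases hji : j = i
      · subst hji
        simp only [updateHom_apply_self]
      · simp only [updateHom_apply_of_ne _ _ _ hji, hfg j (by simp [hji, hj])]

theorem PreservesReflexiveCoeqSeparately.isCoeq_map (hsf : s ≫ f = 𝟙 Y) (hsg : s ≫ g = 𝟙 Y)
    (hq : ∀ j, IsCoeq (f j) (g j) (q j)) : IsCoeq (F.map f) (F.map g) (F.map q) :=
  isCoeq_map_of_eq_of_notMem hF Finset.univ hsf hsg hq fun j hj => absurd (Finset.mem_univ j) hj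

end Functor

theorem stmt_9_general {C : Type u} [Category.{v} C] {n : ℕ}
    (F : (Fin n → C) ⥤ C)
    (Hsep : ∀ (i : Fin n) (A : Fin n → C) (X Y : C) (f g : X ⟶ Y) (s : Y ⟶ X),
      s ≫ f = 𝟙 Y → s ≫ g = 𝟙 Y →
      ∀ (Q : C) (q : Y ⟶ Q), IsCoeq f g q →
        IsCoeq (F.map (updHom A i f)) (F.map (updHom A i g)) (F.map (updHom A i q)))
    (X Y Q : Fin n → C) (f g : ∀ i, X i ⟶ Y i) (s : ∀ i, Y i ⟶ X i)
    (hf : ∀ i, s i ≫ f i = 𝟙 (Y i)) (hg : ∀ i, s i ≫ g i = 𝟙 (Y i))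
    (q : ∀ i, Y i ⟶ Q i) (hq : ∀ i, IsCoeq (f i) (g i) (q i))
    (E : C) (e : F.obj Y ⟶ E)
    (he : IsCoeq (F.map (f : X ⟶ Y)) (F.map (g : X ⟶ Y)) e)
    (h : E ⟶ F.obj Q) (hh : e ≫ h = F.map (q : Y ⟶ Q)) :
    IsIso h :=
  he.isIso_of_isCoeq (PreservesReflexiveCoeqSeparately.isCoeq_map Hsep
    (s := (s : Y ⟶ X)) (funext hf) (funext hg) hq) hh

/-- If a multivariable functor `F : Cⁿ ⥤ C` preserves reflexive coequalizers in each variable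
separately (the other variables being fixed), then it preserves reflexive coequalizers of
`n`-tuples: for reflexive pairs `X i ⇉ Y i` with coequalizers `q i : Y i ⟶ Q i`, the canonical
morphism from the coequalizer `E` of `F(X₁,…,Xₙ) ⇉ F(Y₁,…,Yₙ)` to `F(Q₁,…,Qₙ)` is an
isomorphism. -/
theorem stmt_9 {C : Type u} [Category.{v} C] [HasReflexiveCoequalizers C] {n : ℕ}
    (F : (Fin n → C) ⥤ C)
    (Hsep : ∀ (i : Fin n) (A : Fin n → C) (X Y : C) (f g : X ⟶ Y) (s : Y ⟶ X),
      s ≫ f = 𝟙 Y → s ≫ g = 𝟙 Y →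
      ∀ (Q : C) (q : Y ⟶ Q), IsCoeq f g q →
        IsCoeq (F.map (updHom A i f)) (F.map (updHom A i g)) (F.map (updHom A i q)))
    (X Y Q : Fin n → C) (f g : ∀ i, X i ⟶ Y i) (s : ∀ i, Y i ⟶ X i)
    (hf : ∀ i, s i ≫ f i = 𝟙 (Y i)) (hg : ∀ i, s i ≫ g i = 𝟙 (Y i))
    (q : ∀ i, Y i ⟶ Q i) (hq : ∀ i, IsCoeq (f i) (g i) (q i))
    (E : C) (e : F.obj Y ⟶ E)
    (he : IsCoeq (F.map (f : X ⟶ Y)) (F.map (g : X ⟶ Y)) e)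
    (h : E ⟶ F.obj Q) (hh : e ≫ h = F.map (q : Y ⟶ Q)) :
    IsIso h :=
  stmt_9_general F Hsep X Y Q f g s hf hg q hq E e he h hh
end
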